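/- Geodesic midpoint concavity of the new formulation: let B_j ∈ R^{n_j × n} (j in [m]) each have full row rank and p_j ≥ 0, and define F(X) := log det(X) − Σ_j p_j log det(B_j X B_j^T) for X positive definite. Then for all positive definite X, Y: F(X # Y) ≥ (1/2) F(X) + (1/2) F(Y). -/

import Mathlib

/-!
The geometric mean `Z = X # Y` is the positive definite solution of the Riccati equation
`Z X⁻¹ Z = Y`, hence `det Z ^ 2 = det X * det Y`. Writing `B Z Bᵀ = (B X) X⁻¹ (Z Bᵀ)`, the
weighted Cauchy–Schwarz inequality for determinants `det (M K N) ^ 2 ≤ det (M K Mᴴ) * det (Nᴴ K N)`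
gives `det (B Z Bᵀ) ^ 2 ≤ det (B X Bᵀ) * det (B Y Bᵀ)`; taking logarithms and summing with the
weights `p j ≥ 0` gives the claim. The Cauchy–Schwarz inequality is the Schur complement of the
positive semidefinite block matrix `[M; Nᴴ] K [Mᴴ, N]`, combined with the monotonicity of `det`
in the Loewner order.
-/

open Matrix

/-- Real power of a matrix via the spectral decomposition (defined for Hermitian input). -/
noncomputable def mpow {d : ℕ} (A : Matrix (Fin d) (Fin d) ℝ) (t : ℝ) : Matrix (Fin d) (Fin d) ℝ :=
  if hA : A.IsHermitian then
    (hA.eigenvectorUnitary : Matrix (Fin d) (Fin d) ℝ) *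
      Matrix.diagonal (fun i => hA.eigenvalues i ^ t) *
      star (hA.eigenvectorUnitary : Matrix (Fin d) (Fin d) ℝ)
  else A

/-- The geodesic `X #ₜ Y = X^{1/2} (X^{-1/2} Y X^{-1/2})^t X^{1/2}`. -/
noncomputable def geo {d : ℕ} (X Y : Matrix (Fin d) (Fin d) ℝ) (t : ℝ) : Matrix (Fin d) (Fin d) ℝ :=
  mpow X (1/2) * mpow (mpow X (-(1/2)) * Y * mpow X (-(1/2))) t * mpow X (1/2)

/-- The matrix geometric mean `X # Y`. -/
noncomputable def gmean {d : ℕ} (X Y : Matrix (Fin d) (Fin d) ℝ) : Matrix (Fin d) (Fin d) ℝ :=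
  geo X Y (1/2)

section mpow

variable {d : ℕ} {A : Matrix (Fin d) (Fin d) ℝ}

theorem mpow_of_isHermitian (hA : A.IsHermitian) (t : ℝ) :
    mpow A t = (hA.eigenvectorUnitary : Matrix (Fin d) (Fin d) ℝ) *
      diagonal (fun i => hA.eigenvalues i ^ t) *
      star (hA.eigenvectorUnitary : Matrix (Fin d) (Fin d) ℝ) :=
  dif_pos hA

theorem mpow_add (hA : A.PosDef) (s t : ℝ) : mpow A (s + t) = mpow A s * mpow A t := by
  simp only [mpow_of_isHermitian hA.1, Matrix.mul_assoc, Unitary.coe_star_mul_self,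
    ← Matrix.mul_assoc (star _), Matrix.one_mul]
  rw [← Matrix.mul_assoc (diagonal _), diagonal_mul_diagonal]
  simp_rw [Real.rpow_add (hA.eigenvalues_pos _)]

theorem mpow_zero (hA : A.IsHermitian) : mpow A 0 = 1 := by
  simp [mpow_of_isHermitian hA]

theorem mpow_one (hA : A.IsHermitian) : mpow A 1 = A := by
  conv_rhs => rw [hA.spectral_theorem]
  simp [mpow_of_isHermitian hA]

theorem isHermitian_mpow (hA : A.IsHermitian) (t : ℝ) : (mpow A t).IsHermitian := by
  rw [mpow_of_isHermitian hA, IsHermitian, star_eq_conjTranspose]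
  simp [Matrix.mul_assoc]

theorem posDef_mpow (hA : A.PosDef) (t : ℝ) : (mpow A t).PosDef := by
  rw [mpow_of_isHermitian hA.1]
  exact (IsUnit.posDef_star_right_conjugate_iff Unitary.isUnit_coe).mpr
    (posDef_diagonal_iff.mpr fun i => Real.rpow_pos_of_pos (hA.eigenvalues_pos i) t)

theorem mpow_half_mul_mpow_half (hA : A.PosDef) : mpow A (1 / 2) * mpow A (1 / 2) = A := by
  rw [← mpow_add hA]; norm_num [mpow_one hA.1]

theorem mpow_half_mul_mpow_neg_half (hA : A.PosDef) : mpow A (1 / 2) * mpow A (-(1 / 2)) = 1 := by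
  rw [← mpow_add hA]; norm_num [mpow_zero hA.1]

theorem mpow_neg_half_mul_mpow_half (hA : A.PosDef) : mpow A (-(1 / 2)) * mpow A (1 / 2) = 1 := by
  rw [← mpow_add hA]; norm_num [mpow_zero hA.1]

theorem posDef_mpow_mul_mul_mpow {B : Matrix (Fin d) (Fin d) ℝ} (hA : A.PosDef) (hB : B.PosDef)
    (t : ℝ) : (mpow A t * B * mpow A t).PosDef := by
  have h := (IsUnit.posDef_star_right_conjugate_iff (posDef_mpow hA t).isUnit).mpr hB
  rwa [star_eq_conjTranspose, (isHermitian_mpow hA.1 t).eq] at h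

end mpow

section det

theorem det_le_one_of_posSemidef_one_sub {ι : Type*} [Fintype ι] [DecidableEq ι]
    {S : Matrix ι ι ℝ} (hS : S.PosSemidef) (h : (1 - S).PosSemidef) : S.det ≤ 1 := by
  set U := (hS.1.eigenvectorUnitary : Matrix ι ι ℝ)
  have hdiag : U * diagonal (1 - hS.1.eigenvalues) * star U = 1 - S := by
    rw [show diagonal (1 - hS.1.eigenvalues) = 1 - diagonal hS.1.eigenvalues by
        simp [← diagonal_one, diagonal_sub],
      Matrix.mul_sub, Matrix.sub_mul, Matrix.mul_one,
      Unitary.mul_star_self_of_mem (SetLike.coe_mem _)]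
    conv_rhs => rw [hS.1.spectral_theorem]
    simp [U]
  rw [← hdiag, IsUnit.posSemidef_star_right_conjugate_iff Unitary.isUnit_coe,
    posSemidef_diagonal_iff] at h
  rw [hS.1.det_eq_prod_eigenvalues]
  exact Finset.prod_le_one (fun i _ => by simpa using hS.eigenvalues_nonneg i)
    (fun i _ => by simpa using h i)

variable {d : ℕ}

theorem det_le_det_of_posSemidef_sub {A C : Matrix (Fin d) (Fin d) ℝ} (hA : A.PosDef)
    (hC : C.PosSemidef) (h : (A - C).PosSemidef) : C.det ≤ A.det := by
  set R := mpow A (-(1 / 2))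
  have hR : Rᴴ = R := (isHermitian_mpow hA.1 _).eq
  have hRAR : R * A * R = 1 := by
    conv_lhs => rw [← mpow_half_mul_mpow_half hA]
    rw [Matrix.mul_assoc, Matrix.mul_assoc, mpow_half_mul_mpow_neg_half hA, ← Matrix.mul_assoc,
      mpow_neg_half_mul_mpow_half hA, Matrix.one_mul]
  have hRCR : (R * C * R).det ≤ 1 := by
    refine det_le_one_of_posSemidef_one_sub ?_ ?_
    · simpa only [hR] using hC.mul_mul_conjTranspose_same R
    · rw [← hRAR, ← Matrix.sub_mul, ← Matrix.mul_sub]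
      simpa only [hR] using h.mul_mul_conjTranspose_same R
  have hRA : R.det * R.det * A.det = 1 := by
    rw [← det_one (n := Fin d), ← hRAR, det_mul, det_mul]; ring
  have hRpos : 0 < R.det * R.det := mul_self_pos.mpr (posDef_mpow hA _).det_pos.ne'
  rw [det_mul, det_mul] at hRCR
  nlinarith

theorem det_mul_mul_sq_le {k : ℕ} {K : Matrix (Fin d) (Fin d) ℝ} (hK : K.PosSemidef)
    (M : Matrix (Fin k) (Fin d) ℝ) (N : Matrix (Fin d) (Fin k) ℝ)
    (hM : (M * K * Mᴴ).PosDef) (hN : (Nᴴ * K * N).PosDef) :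
    (M * K * N).det ^ 2 ≤ (M * K * Mᴴ).det * (Nᴴ * K * N).det := by
  have : Invertible (Nᴴ * K * N) := hN.isUnit.invertible
  have hblock :
      (fromBlocks (M * K * Mᴴ) (M * K * N) (M * K * N)ᴴ (Nᴴ * K * N)).PosSemidef := by
    rw [conjTranspose_mul, conjTranspose_mul, hK.1.eq, ← Matrix.mul_assoc]
    have := hK.mul_mul_conjTranspose_same (fromRows M Nᴴ)
    rwa [conjTranspose_fromRows_eq_fromCols_conjTranspose, conjTranspose_conjTranspose,
      fromRows_mul, fromRows_mul_fromCols] at this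
  have hschur := (PosDef.fromBlocks₂₂ _ _ hN).mp hblock
  have hC := hN.inv.posSemidef.mul_mul_conjTranspose_same (M * K * N)
  have hle := det_le_det_of_posSemidef_sub hM hC hschur
  rw [det_mul, det_mul, det_conjTranspose, star_trivial, det_nonsing_inv,
    Ring.inverse_eq_inv'] at hle
  have hG := hN.det_pos
  calc (M * K * N).det ^ 2
      = (M * K * N).det * (Nᴴ * K * N).det⁻¹ * (M * K * N).det * (Nᴴ * K * N).det := by
        field_simp
    _ ≤ _ := by gcongr

end det

theorem vecMul_injective_of_surjective_mulVecLin {R m n : Type*} [CommSemiring R] [Fintype m]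
    [Fintype n] [DecidableEq m] {B : Matrix m n R} (hB : Function.Surjective B.mulVecLin) :
    Function.Injective B.vecMul := by
  obtain ⟨C, hC⟩ := mulVec_surjective_iff_exists_right_inverse.mp hB
  intro x y hxy
  simpa [vecMul_vecMul, hC] using congrArg (· ᵥ* C) hxy

theorem det_mul_mul_conjTranspose_sq_le {k n : ℕ} {X Y Z : Matrix (Fin n) (Fin n) ℝ}
    (hX : X.PosDef) (hY : Y.PosDef) (hZ : Z.IsHermitian) (hZXZ : Z * X⁻¹ * Z = Y)
    (B : Matrix (Fin k) (Fin n) ℝ) (hB : Function.Injective B.vecMul) :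
    (B * Z * Bᴴ).det ^ 2 ≤ (B * X * Bᴴ).det * (B * Y * Bᴴ).det := by
  have hXX : X * X⁻¹ = 1 := mul_nonsing_inv X hX.det_pos.ne'.isUnit
  have hZB : B * X * X⁻¹ * (Z * Bᴴ) = B * Z * Bᴴ := by
    rw [Matrix.mul_assoc B, hXX]; simp only [Matrix.mul_one, Matrix.mul_assoc]
  have hXB : B * X * X⁻¹ * (B * X)ᴴ = B * X * Bᴴ := by
    rw [Matrix.mul_assoc B, hXX, conjTranspose_mul, hX.1.eq, Matrix.mul_one, Matrix.mul_assoc]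
  have hYB : (Z * Bᴴ)ᴴ * X⁻¹ * (Z * Bᴴ) = B * Y * Bᴴ := by
    rw [← hZXZ, conjTranspose_mul, conjTranspose_conjTranspose, hZ.eq]
    simp only [Matrix.mul_assoc]
  have hdet := det_mul_mul_sq_le hX.inv.posSemidef (B * X) (Z * Bᴴ)
    (hXB ▸ hX.mul_mul_conjTranspose_same hB) (hYB ▸ hY.mul_mul_conjTranspose_same hB)
  rwa [hZB, hXB, hYB] at hdet

section gmean

variable {d : ℕ} {X Y : Matrix (Fin d) (Fin d) ℝ}

theorem posDef_gmean (hX : X.PosDef) (hY : Y.PosDef) : (gmean X Y).PosDef :=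
  posDef_mpow_mul_mul_mpow hX (posDef_mpow (posDef_mpow_mul_mul_mpow hX hY _) _) _

theorem gmean_mul_inv_mul_gmean (hX : X.PosDef) (hY : Y.PosDef) :
    gmean X Y * X⁻¹ * gmean X Y = Y := by
  set S := mpow X (1 / 2)
  set R := mpow X (-(1 / 2))
  have hSR : S * R = 1 := mpow_half_mul_mpow_neg_half hX
  have hRS : R * S = 1 := mpow_neg_half_mul_mpow_half hX
  have hXinv : X⁻¹ = R * R := by
    refine inv_eq_right_inv ?_
    rw [← mpow_half_mul_mpow_half hX, Matrix.mul_assoc, ← Matrix.mul_assoc S R, hSR,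
      Matrix.one_mul, hSR]
  set T := mpow (R * Y * R) (1 / 2)
  have hT : T * T = R * Y * R := mpow_half_mul_mpow_half (posDef_mpow_mul_mul_mpow hX hY _)
  calc gmean X Y * X⁻¹ * gmean X Y = S * T * (S * R) * (R * S) * T * S := by
        rw [hXinv]; simp only [gmean, geo, S, R, T, Matrix.mul_assoc]
    _ = S * (T * T) * S := by rw [hSR, hRS]; simp only [Matrix.mul_one, Matrix.mul_assoc]
    _ = (S * R) * Y * (R * S) := by rw [hT]; simp only [Matrix.mul_assoc]
    _ = Y := by rw [hSR, hRS, Matrix.one_mul, Matrix.mul_one]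

theorem det_gmean_sq (hX : X.PosDef) (hY : Y.PosDef) :
    (gmean X Y).det ^ 2 = X.det * Y.det := by
  have h := congrArg det (gmean_mul_inv_mul_gmean hX hY)
  rw [det_mul, det_mul, det_nonsing_inv, Ring.inverse_eq_inv'] at h
  have := hX.det_pos.ne'
  rw [← h]
  field_simp

theorem two_mul_log_det_mul_gmean_mul_transpose_le {k : ℕ} (hX : X.PosDef) (hY : Y.PosDef)
    (B : Matrix (Fin k) (Fin d) ℝ) (hB : Function.Injective B.vecMul) :
    2 * Real.log (B * gmean X Y * Bᵀ).det ≤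
      Real.log (B * X * Bᵀ).det + Real.log (B * Y * Bᵀ).det := by
  have hZ := posDef_gmean hX hY
  have hdet := det_mul_mul_conjTranspose_sq_le hX hY hZ.1 (gmean_mul_inv_mul_gmean hX hY) B hB
  have hXB := (hX.mul_mul_conjTranspose_same hB).det_pos
  have hYB := (hY.mul_mul_conjTranspose_same hB).det_pos
  have hZB := (hZ.mul_mul_conjTranspose_same hB).det_pos
  rw [conjTranspose_eq_transpose_of_trivial] at hdet hXB hYB hZB
  have := Real.log_le_log (pow_pos hZB 2) hdet
  rwa [Real.log_pow, Real.log_mul hXB.ne' hYB.ne', Nat.cast_ofNat] at this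

end gmean

theorem stmt10 {n m : ℕ} (nj : Fin m → ℕ)
    (B : ∀ j : Fin m, Matrix (Fin (nj j)) (Fin n) ℝ) (p : Fin m → ℝ)
    (hrank : ∀ j, Function.Surjective (B j).mulVecLin)
    (hp : ∀ j, 0 ≤ p j)
    (F : Matrix (Fin n) (Fin n) ℝ → ℝ)
    (hF : ∀ X, F X = Real.log X.det - ∑ j, p j * Real.log (B j * X * (B j)ᵀ).det)
    (X Y : Matrix (Fin n) (Fin n) ℝ) (hX : X.PosDef) (hY : Y.PosDef) :
    F (gmean X Y) ≥ (1/2) * F X + (1/2) * F Y := by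
  have hlogZ : 2 * Real.log (gmean X Y).det = Real.log X.det + Real.log Y.det := by
    rw [← Real.log_mul hX.det_pos.ne' hY.det_pos.ne', ← det_gmean_sq hX hY, Real.log_pow,
      Nat.cast_ofNat]
  have hterm (j : Fin m) : p j * Real.log (B j * gmean X Y * (B j)ᵀ).det ≤
      p j * Real.log (B j * X * (B j)ᵀ).det / 2 + p j * Real.log (B j * Y * (B j)ᵀ).det / 2 := by
    have := two_mul_log_det_mul_gmean_mul_transpose_le hX hY (B j)
      (vecMul_injective_of_surjective_mulVecLin (hrank j))
    nlinarith [hp j]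
  have hsum := Finset.sum_le_sum fun j (_ : j ∈ Finset.univ) => hterm j
  rw [Finset.sum_add_distrib, ← Finset.sum_div, ← Finset.sum_div] at hsum
  rw [hF, hF, hF]
  linarith
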